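/- arXiv:2305.12658 — 5 statements merged into one kernel-verified Lean document; each statement's English description precedes it below -/
import Mathlib

section
/- If a dual matrix Â = A + εB has a dual Drazin generalized inverse, then it is unique. -/
open Matrix Finset

noncomputable section

/-- The dual matrix `A + εB` as a matrix over the dual numbers `ℝ[ε]/(ε²)`. -/
def dmat {m : Type*} (A B : Matrix m m ℝ) : Matrix m m (DualNumber ℝ) :=
  Matrix.of fun i j => TrivSqZeroExt.inl (A i j) + TrivSqZeroExt.inr (B i j)

/-- `x` is a Drazin inverse of `a` with index parameter `k`
(for `k = 1` this is the group inverse). -/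
def IsDrazin {R : Type*} [Monoid R] (k : ℕ) (a x : R) : Prop :=
  a ^ k * x * a = a ^ k ∧ x * a * x = x ∧ a * x = x * a

/-- `A` has index `k`: `k` is the smallest nonnegative integer with
`rank (A^k) = rank (A^(k+1))`. -/
def hasIndex {m : Type*} [Fintype m] [DecidableEq m] (A : Matrix m m ℝ) (k : ℕ) : Prop :=
  (A ^ (k + 1)).rank = (A ^ k).rank ∧ ∀ j < k, (A ^ (j + 1)).rank ≠ (A ^ j).rank

/-- `D = A^{k-1} B + A^{k-2} B A + ⋯ + B A^{k-1}`. -/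
def dsum {m : Type*} [Fintype m] [DecidableEq m] (A B : Matrix m m ℝ) (k : ℕ) :
    Matrix m m ℝ :=
  ∑ i ∈ Finset.range k, A ^ i * B * A ^ (k - 1 - i)

/-! `x a x = x` together with `a x = x a` makes `x a` idempotent and lets `x` absorb powers:
`x = x^{k+1} a^k`. Feeding `a^k = a^{k+1} y` and `a^k = x a^{k+1}` into these identities turns
both `x` and `y` into `x a y`. -/

namespace IsDrazin

variable {M : Type*} [Monoid M] {k : ℕ} {a x y : M}

theorem commute (h : IsDrazin k a x) : Commute a x := h.2.2

theorem pow_succ_mul (h : IsDrazin k a x) : a ^ (k + 1) * x = a ^ k := by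
  rw [pow_succ, mul_assoc, h.commute.eq, ← mul_assoc, h.1]

theorem mul_pow_succ (h : IsDrazin k a x) : x * a ^ (k + 1) = a ^ k := by
  rw [← (h.commute.pow_left (k + 1)).eq, h.pow_succ_mul]

theorem isIdempotentElem_mul (h : IsDrazin k a x) : IsIdempotentElem (a * x) := by
  rw [IsIdempotentElem, mul_assoc, ← mul_assoc x, h.2.1]

theorem pow_succ_mul_pow_succ (h : IsDrazin k a x) (m : ℕ) :
    a ^ (m + 1) * x ^ (m + 1) = a * x := by
  rw [← h.commute.mul_pow, h.isIdempotentElem_mul.pow_succ_eq]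

theorem pow_succ_mul_pow (h : IsDrazin k a x) (m : ℕ) : x ^ (m + 1) * a ^ m = x := by
  have absorb : ∀ j : ℕ, x * (x * a) ^ j = x := by
    intro j
    induction j with
    | zero => rw [pow_zero, mul_one]
    | succ j ih => rw [pow_succ, ← mul_assoc, ih, ← h.commute.eq, ← mul_assoc, h.2.1]
  rw [pow_succ', mul_assoc, ← h.commute.symm.mul_pow, absorb]

theorem unique (hx : IsDrazin k a x) (hy : IsDrazin k a y) : x = y :=
  calc x = x ^ (k + 1) * a ^ k := (hx.pow_succ_mul_pow k).symm
    _ = a ^ (k + 1) * x ^ (k + 1) * y := by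
      rw [← hy.pow_succ_mul, ← mul_assoc, (hx.commute.pow_pow _ _).eq]
    _ = x * (a * y) := by rw [hx.pow_succ_mul_pow_succ, hx.commute.eq, mul_assoc]
    _ = x * a ^ (k + 1) * y ^ (k + 1) := by rw [mul_assoc, hy.pow_succ_mul_pow_succ]
    _ = y := by rw [hx.mul_pow_succ, (hy.commute.pow_pow _ _).eq, hy.pow_succ_mul_pow]

end IsDrazin

theorem ddgi_unique_general {n k : ℕ} (A B : Matrix (Fin n) (Fin n) ℝ)
    (X Y : Matrix (Fin n) (Fin n) (DualNumber ℝ))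
    (hX : IsDrazin k (dmat A B) X) (hY : IsDrazin k (dmat A B) Y) : X = Y :=
  hX.unique hY

theorem ddgi_unique {n k : ℕ} (A B : Matrix (Fin n) (Fin n) ℝ) (hk : hasIndex A k)
    (X Y : Matrix (Fin n) (Fin n) (DualNumber ℝ))
    (hX : IsDrazin k (dmat A B) X) (hY : IsDrazin k (dmat A B) Y) : X = Y :=
  ddgi_unique_general A B X Y hX hY
end
end

section
/- A dual matrix X̂ = X + εR is a dual Drazin generalized inverse of Â = A + εB (with Ind(Â) = k) if and only if X = A^D and the real matrices satisfy: (1) A^k A^D B + A^k R A + (A^{k-1}B + A^{k-2}BA + ⋯ + BA^{k-1})(A^D A − I) = 0; (2) R = A^D A R + A^D B A^D + R A A^D; (3) A R + B A^D = R A + A^D B. -/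
open Matrix Finset

noncomputable section

/-!
Multiplication of dual matrices is `(A + εB)(C + εD) = AC + ε(AD + BC)`, so `(A + εB)^k`
has real part `A^k` and dual part `A^{k-1}B + ⋯ + BA^{k-1}`. Splitting the three Drazin
equations for `Â` into real and dual parts, the real parts say that `X` is a Drazin inverse
of `A`, hence `X = A^D` by uniqueness, and the dual parts are conditions (1)–(3) rearranged.
-/

namespace IsDrazin

variable {M : Type*} [Monoid M] {k : ℕ} {a x y : M}

theorem pow_mul_pow_succ (h : IsDrazin k a x) (m : ℕ) : a ^ m * x ^ (m + 1) = x := by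
  rw [(h.commute.pow_pow m (m + 1)).eq, h.pow_succ_mul_pow]

theorem pow_mul_mul_self (h : IsDrazin k a x) : a ^ k * (a * x) = a ^ k := by
  rw [h.commute.eq, ← mul_assoc, h.1]

theorem mul_self_mul_pow (h : IsDrazin k a x) : a * x * a ^ k = a ^ k := by
  rw [(((Commute.refl a).mul_right h.commute).symm.pow_right k).eq, h.pow_mul_mul_self]

theorem iff_eq (hy : IsDrazin k a y) : IsDrazin k a x ↔ x = y :=
  ⟨fun hx => hx.unique hy, fun e => e ▸ hy⟩

end IsDrazin

section DualMatrix

variable {m : Type*}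

theorem dmat_inj {A B C D : Matrix m m ℝ} : dmat A B = dmat C D ↔ A = C ∧ B = D := by
  refine ⟨fun h => ⟨?_, ?_⟩, fun ⟨hAC, hBD⟩ => hAC ▸ hBD ▸ rfl⟩ <;> ext i j
  · simpa [dmat] using congrArg TrivSqZeroExt.fst (congrFun (congrFun h i) j)
  · simpa [dmat] using congrArg TrivSqZeroExt.snd (congrFun (congrFun h i) j)

theorem dmat_one [DecidableEq m] : dmat (1 : Matrix m m ℝ) 0 = 1 := by
  ext i j <;> by_cases hij : i = j <;> simp [dmat, one_apply, hij]

variable [Fintype m]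

theorem dmat_mul (A B C D : Matrix m m ℝ) :
    dmat A B * dmat C D = dmat (A * C) (A * D + B * C) := by
  ext i j <;>
    simp [dmat, mul_apply, TrivSqZeroExt.fst_sum, TrivSqZeroExt.snd_sum, sum_add_distrib,
      mul_comm]

variable [DecidableEq m]

theorem dsum_succ (A B : Matrix m m ℝ) (k : ℕ) :
    dsum A B (k + 1) = dsum A B k * A + A ^ k * B := by
  rw [dsum, sum_range_succ, dsum, sum_mul, Nat.add_sub_cancel, Nat.sub_self, pow_zero, mul_one]
  congr 1
  refine sum_congr rfl fun i hi => ?_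
  rw [show k - i = k - 1 - i + 1 by have := mem_range.mp hi; omega, pow_succ, ← mul_assoc]

theorem dmat_pow (A B : Matrix m m ℝ) (k : ℕ) : dmat A B ^ k = dmat (A ^ k) (dsum A B k) := by
  induction k with
  | zero => simp [dsum, dmat_one]
  | succ k ih => rw [pow_succ, ih, dmat_mul, ← pow_succ, dsum_succ, add_comm (A ^ k * B)]

theorem isDrazin_dmat_iff {k : ℕ} {A B X R : Matrix m m ℝ} :
    IsDrazin k (dmat A B) (dmat X R) ↔
      IsDrazin k A X ∧
      A ^ k * X * B + (A ^ k * R + dsum A B k * X) * A = dsum A B k ∧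
      X * A * R + (X * B + R * A) * X = R ∧
      A * R + B * X = X * B + R * A := by
  simp only [IsDrazin, dmat_pow, dmat_mul, dmat_inj]
  tauto

end DualMatrix

theorem ddgi_characterization_general {n k : ℕ} (A B AD X R : Matrix (Fin n) (Fin n) ℝ)
    (hAD : IsDrazin k A AD) :
    IsDrazin k (dmat A B) (dmat X R) ↔
      (X = AD ∧
       A ^ k * AD * B + A ^ k * R * A + dsum A B k * (AD * A - 1) = 0 ∧
       R = AD * A * R + AD * B * AD + R * A * AD ∧
       A * R + B * AD = R * A + AD * B) := by
  rw [isDrazin_dmat_iff, hAD.iff_eq]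
  refine and_congr_right fun hX => ?_
  subst hX
  refine and_congr ?_ (and_congr ?_ ?_)
  · rw [show A ^ k * X * B + A ^ k * R * A + dsum A B k * (X * A - 1) =
        A ^ k * X * B + (A ^ k * R + dsum A B k * X) * A - dsum A B k by noncomm_ring, sub_eq_zero]
  · rw [eq_comm, show X * A * R + (X * B + R * A) * X = X * A * R + X * B * X + R * A * X by
      noncomm_ring]
  · rw [add_comm (X * B)]

theorem ddgi_characterization {n k : ℕ} (A B AD X R : Matrix (Fin n) (Fin n) ℝ)
    (hk : hasIndex A k) (hAD : IsDrazin k A AD) :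
    IsDrazin k (dmat A B) (dmat X R) ↔
      (X = AD ∧
       A ^ k * AD * B + A ^ k * R * A + dsum A B k * (AD * A - 1) = 0 ∧
       R = AD * A * R + AD * B * AD + R * A * AD ∧
       A * R + B * AD = R * A + AD * B) :=
  ddgi_characterization_general A B AD X R hAD
end
end

section
/- If the DDGI of a dual matrix Â = A + εB exists with Ind(Â) = k, then R(Â^k) ∩ N(Â^k) = {0}, where R and N denote the range and null space of Â^k acting on dual vectors. -/
open Matrix Finset

noncomputable section

/-! Iterating `aᵏ x a = aᵏ` and letting `x` commute with `a` gives `xᵏ a²ᵏ = aᵏ`; so if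
`v = aᵏ z` and `aᵏ v = 0`, then `v = xᵏ aᵏ v = 0`. -/

namespace IsDrazin

variable {R : Type*} [Monoid R] {k : ℕ} {a x : R}

theorem pow_mul_mul_pow_eq (h : IsDrazin k a x) (j : ℕ) : a ^ k * (x * a) ^ j = a ^ k := by
  induction j with
  | zero => simp
  | succ j ih => rw [pow_succ, ← mul_assoc, ih, ← mul_assoc, h.1]

theorem pow_mul_pow_mul_pow_eq (h : IsDrazin k a x) : x ^ k * (a ^ k * a ^ k) = a ^ k := by
  have hcomm : Commute a x := h.2.2
  calc x ^ k * (a ^ k * a ^ k) = a ^ k * (x * a) ^ k := by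
        rw [← mul_assoc, (hcomm.pow_pow k k).symm.eq, mul_assoc, ← hcomm.symm.mul_pow]
    _ = a ^ k := h.pow_mul_mul_pow_eq k

end IsDrazin

theorem Matrix.eq_zero_of_mulVec_eq_of_mulVec_eq_zero {m R : Type*} [Fintype m]
    [NonUnitalSemiring R] {P Y : Matrix m m R} (hP : Y * (P * P) = P) {z v : m → R}
    (hz : P *ᵥ z = v) (hv : P *ᵥ v = 0) : v = 0 :=
  calc v = (Y * (P * P)) *ᵥ z := by rw [hP, hz]
    _ = Y *ᵥ (P *ᵥ v) := by rw [← mulVec_mulVec, ← mulVec_mulVec, hz]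
    _ = 0 := by rw [hv, mulVec_zero]

theorem ddgi_range_inter_null_general {n k : ℕ} (A B : Matrix (Fin n) (Fin n) ℝ)
    (hex : ∃ X : Matrix (Fin n) (Fin n) (DualNumber ℝ), IsDrazin k (dmat A B) X) :
    ∀ v : Fin n → DualNumber ℝ,
      (∃ z : Fin n → DualNumber ℝ, ((dmat A B) ^ k).mulVec z = v) →
      ((dmat A B) ^ k).mulVec v = 0 → v = 0 := by
  obtain ⟨X, hX⟩ := hex
  rintro v ⟨z, hz⟩ hv
  exact eq_zero_of_mulVec_eq_of_mulVec_eq_zero hX.pow_mul_pow_mul_pow_eq hz hv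

theorem ddgi_range_inter_null {n k : ℕ} (A B : Matrix (Fin n) (Fin n) ℝ)
    (hk : hasIndex A k)
    (hex : ∃ X : Matrix (Fin n) (Fin n) (DualNumber ℝ), IsDrazin k (dmat A B) X) :
    ∀ v : Fin n → DualNumber ℝ,
      (∃ z : Fin n → DualNumber ℝ, ((dmat A B) ^ k).mulVec z = v) →
      ((dmat A B) ^ k).mulVec v = 0 → v = 0 :=
  ddgi_range_inter_null_general A B hex
end
end

section
/- The dual group inverse does not exist for every square dual matrix of index 1: for A = diag(4, 0, 5) and B = [[1,0,4],[1,2,0],[0,2,0]], the dual matrix Â = A + εB has no dual group generalized inverse. -/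
open Matrix Finset

noncomputable section

/-! The middle row and column of `A = diag(4, 0, 5)` vanish, so those entries of `Â = A + εB` are
multiples of `ε`. Hence every term of `(Â X Â)₂₂` is a multiple of `ε² = 0`, while `Â₂₂ = 2ε`:
already the equation `Â X Â = Â` has no solution. -/

theorem DualNumber.mul_mul_eq_zero_of_fst_eq_zero {R : Type*} [CommSemiring R]
    {a c : DualNumber R} (ha : a.fst = 0) (hc : c.fst = 0) (b : DualNumber R) :
    a * b * c = 0 := by
  ext <;> simp [TrivSqZeroExt.snd_mul, ha, hc]

theorem Matrix.mul_mul_apply_self_eq_zero_of_fst_eq_zero {m R : Type*} [Fintype m]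
    [CommSemiring R] {M : Matrix m m (DualNumber R)} {i : m} (hrow : ∀ k, (M i k).fst = 0)
    (hcol : ∀ k, (M k i).fst = 0) (X : Matrix m m (DualNumber R)) :
    (M * X * M) i i = 0 := by
  simp only [Matrix.mul_apply, Finset.sum_mul]
  exact Finset.sum_eq_zero fun j _ => Finset.sum_eq_zero fun k _ =>
    DualNumber.mul_mul_eq_zero_of_fst_eq_zero (hrow k) (hcol j) _

@[simp]
theorem fst_dmat_apply {m : Type*} (A B : Matrix m m ℝ) (i j : m) :
    (dmat A B i j).fst = A i j := by
  simp [dmat]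

@[simp]
theorem snd_dmat_apply {m : Type*} (A B : Matrix m m ℝ) (i j : m) :
    (dmat A B i j).snd = B i j := by
  simp [dmat]

theorem dggi_not_always_exists :
    ¬ ∃ X : Matrix (Fin 3) (Fin 3) (DualNumber ℝ),
      IsDrazin 1
        (dmat (!![(4:ℝ),0,0; 0,0,0; 0,0,5]) (!![(1:ℝ),0,4; 1,2,0; 0,2,0])) X := by
  rintro ⟨X, hinner, -, -⟩
  rw [pow_one] at hinner
  have h11 := congrArg TrivSqZeroExt.snd (congrFun (congrFun hinner 1) 1)
  rw [Matrix.mul_mul_apply_self_eq_zero_of_fst_eq_zero (fun k => by fin_cases k <;> simp)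
    (fun k => by fin_cases k <;> simp)] at h11
  simp at h11
end
end

section
/- The D-group order on dual matrices possessing a DGGI is a partial order: it is reflexive, antisymmetric, and transitive. -/
open Matrix Finset

noncomputable section

/-- The D-group order on dual matrices admitting a dual group generalized inverse. -/
def dgOrder {n : ℕ} (M N : Matrix (Fin n) (Fin n) (DualNumber ℝ)) : Prop :=
  ∃ X, IsDrazin 1 M X ∧ X * M = X * N ∧ M * X = N * X

/-!
If `x` is the group inverse of `a`, the defining conditions `x a = x b`, `a x = b x` of
`a ≤ b` are equivalent to `a b = a² = b a`, which no longer mentions `x`. In that form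
transitivity is a computation with squares (`a a c = a b b = a a a`, then cancel by `x`),
and antisymmetry is the chain `a = a x b = a x b y b = a y b = b y b = b`.
-/

namespace IsDrazin

variable {R : Type*} [Monoid R] {a b c x y : R}

theorem one_iff : IsDrazin 1 a x ↔ a * x * a = a ∧ x * a * x = x ∧ a * x = x * a := by
  simp only [IsDrazin, pow_one]

theorem inv_mul_mul_self (h : IsDrazin 1 a x) : x * (a * a) = a := by
  obtain ⟨ha, -, hcomm⟩ := one_iff.mp h
  rw [← mul_assoc, ← hcomm, ha]

theorem mul_self_mul_inv (h : IsDrazin 1 a x) : a * a * x = a := by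
  obtain ⟨ha, -, hcomm⟩ := one_iff.mp h
  rw [mul_assoc, hcomm, ← mul_assoc, ha]

theorem inv_mul_inv_mul (h : IsDrazin 1 a x) : x * (x * a) = x := by
  obtain ⟨-, hx, hcomm⟩ := one_iff.mp h
  rw [← hcomm, ← mul_assoc, hx]

theorem mul_inv_mul_inv (h : IsDrazin 1 a x) : a * x * x = x := by
  obtain ⟨-, hx, hcomm⟩ := one_iff.mp h
  rw [hcomm, hx]

theorem le_iff (h : IsDrazin 1 a x) :
    x * a = x * b ∧ a * x = b * x ↔ a * b = a * a ∧ b * a = a * a := by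
  constructor
  · rintro ⟨hxb, hbx⟩
    obtain ⟨ha, -, -⟩ := one_iff.mp h
    have haxb : a * x * b = a := by rw [mul_assoc, ← hxb, ← mul_assoc, ha]
    have hbxa : b * x * a = a := by rw [← hbx, ha]
    constructor
    · calc a * b = a * (a * x * b) := by rw [← mul_assoc, ← mul_assoc, h.mul_self_mul_inv]
        _ = a * a := by rw [haxb]
    · calc b * a = b * x * a * a := by rw [mul_assoc (b * x), mul_assoc b, h.inv_mul_mul_self]
        _ = a * a := by rw [hbxa]
  · rintro ⟨hab, hba⟩
    constructor
    · calc x * a = x * (x * (a * a)) := by rw [h.inv_mul_mul_self]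
        _ = x * (x * (a * b)) := by rw [hab]
        _ = x * (x * a) * b := by simp only [mul_assoc]
        _ = x * b := by rw [h.inv_mul_inv_mul]
    · calc a * x = a * a * x * x := by rw [h.mul_self_mul_inv]
        _ = b * a * x * x := by rw [hba]
        _ = b * (a * x * x) := by simp only [mul_assoc]
        _ = b * x := by rw [h.mul_inv_mul_inv]

theorem mul_eq_mul_self_trans (h : IsDrazin 1 a x)
    (hab : a * b = a * a) (hba : b * a = a * a) (hbc : b * c = b * b) (hcb : c * b = b * b) :
    a * c = a * a ∧ c * a = a * a := by
  have haac : a * a * c = a * a * a := by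
    calc a * a * c = a * b * b := by rw [← hab, mul_assoc, hbc, ← mul_assoc]
      _ = a * a * a := by rw [hab, mul_assoc, hab, ← mul_assoc]
  have hcaa : c * (a * a) = a * a * a := by
    calc c * (a * a) = b * b * a := by rw [← hba, ← mul_assoc, hcb]
      _ = a * a * a := by rw [mul_assoc, hba, ← mul_assoc, hba]
  constructor
  · calc a * c = x * (a * a * c) := by rw [← mul_assoc, h.inv_mul_mul_self]
      _ = a * a := by rw [haac, ← mul_assoc, h.inv_mul_mul_self]
  · calc c * a = c * (a * a) * x := by rw [mul_assoc, h.mul_self_mul_inv]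
      _ = a * (a * a * x) := by rw [hcaa]; simp only [mul_assoc]
      _ = a * a := by rw [h.mul_self_mul_inv]

theorem eq_of_le_of_le (hx : IsDrazin 1 a x) (hy : IsDrazin 1 b y)
    (hxab : x * a = x * b) (hyba : b * y = a * y) : a = b := by
  obtain ⟨ha, -, -⟩ := one_iff.mp hx
  obtain ⟨hb, -, -⟩ := one_iff.mp hy
  have haxb : a * x * b = a := by rw [mul_assoc, ← hxab, ← mul_assoc, ha]
  calc a = a * x * (b * y * b) := by rw [hb, haxb]
    _ = a * x * b * y * b := by simp only [mul_assoc]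
    _ = a * y * b := by rw [haxb]
    _ = b := by rw [← hyba, hb]

end IsDrazin

theorem dgroup_order_is_partial_order {n : ℕ} :
    (∀ M : Matrix (Fin n) (Fin n) (DualNumber ℝ),
      (∃ X, IsDrazin 1 M X) → dgOrder M M) ∧
    (∀ M N : Matrix (Fin n) (Fin n) (DualNumber ℝ),
      dgOrder M N → dgOrder N M → M = N) ∧
    (∀ M N P : Matrix (Fin n) (Fin n) (DualNumber ℝ),
      dgOrder M N → dgOrder N P → dgOrder M P) := by
  refine ⟨?refl, ?antisymm, ?trans⟩
  case refl =>
    rintro M ⟨X, hX⟩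
    exact ⟨X, hX, rfl, rfl⟩
  case antisymm =>
    rintro M N ⟨X, hX, hXMN, -⟩ ⟨Y, hY, -, hNYM⟩
    exact hX.eq_of_le_of_le hY hXMN hNYM
  case trans =>
    rintro M N P ⟨X, hX, hMN⟩ ⟨Y, hY, hNP⟩
    obtain ⟨hMN₁, hMN₂⟩ := hX.le_iff.mp hMN
    obtain ⟨hNP₁, hNP₂⟩ := hY.le_iff.mp hNP
    exact ⟨X, hX, hX.le_iff.mpr (hX.mul_eq_mul_self_trans hMN₁ hMN₂ hNP₁ hNP₂)⟩
end
end
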